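/- arXiv:2309.17416 — 6 statements merged into one kernel-verified Lean document; each statement's English description precedes it below -/
import Mathlib

section
/- For any variable (or integer) y and nonnegative integers a, b, c, the following identity holds: ∑_{j ≥ 0} binom(b, j) · binom(y+a, a-b+1+j) · binom(y+a+b+c-j, c-j) = binom(y+a+c, a-b+c+1) · binom(a+c+1, c). -/
open Finset

/-- Generalized binomial coefficient `binom(a, b)` for integers `a, b`:
`a(a-1)⋯(a-b+1)/b!` when `b ≥ 0`, and `0` when `b < 0`. -/
noncomputable def zbinom (a b : ℤ) : ℤ := if 0 ≤ b then Ring.choose a b.toNat else 0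

/-!
Write `S(a,b,c;y)` for the left-hand side and `R(a,b,c;y)` for the right-hand side, with `a ≥ -1`
allowed. Pascal's rule applied to the two factors depending on `y` shows that both satisfy
`F(a,b,c+1;y) = F(a,b,c;y) + F(a-1,b,c+1;y) + F(a,b,c+1;y-1)`, so by induction on `c` and then
on `a` the difference `S - R` is `1`-periodic in `y`. Both sides agree for `c = 0` and for
`a = -1`, where the sum has a single term, and at `y = -a`, where only `j = b - a - 1` survives
and the identity becomes trinomial revision.
-/

lemma zbinom_of_neg {k : ℤ} (hk : k < 0) (x : ℤ) : zbinom x k = 0 := by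
  simp [zbinom, not_le.2 hk]

lemma zbinom_zero_right (x : ℤ) : zbinom x 0 = 1 := by
  simp [zbinom]

lemma zbinom_natCast (n : ℕ) {k : ℤ} (hk : 0 ≤ k) : zbinom n k = n.choose k.toNat := by
  simp [zbinom, hk, Ring.choose_natCast]

lemma zbinom_natCast_of_lt {n : ℕ} {k : ℤ} (h : n < k) : zbinom n k = 0 := by
  rw [zbinom_natCast n (by omega), Nat.choose_eq_zero_of_lt (by omega), Nat.cast_zero]

lemma zbinom_self (n : ℕ) : zbinom n n = 1 := by
  simp [zbinom_natCast n (Int.natCast_nonneg n)]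

lemma zbinom_zero_left {k : ℤ} (hk : k ≠ 0) : zbinom 0 k = 0 := by
  rcases hk.lt_or_gt with hk | hk
  · exact zbinom_of_neg hk 0
  · simpa using zbinom_natCast_of_lt (n := 0) hk

lemma zbinom_pascal (x k : ℤ) : zbinom x k = zbinom (x - 1) (k - 1) + zbinom (x - 1) k := by
  rcases lt_trichotomy k 0 with hk | rfl | hk
  · simp [zbinom_of_neg, hk, show k - 1 < 0 by omega]
  · simp [zbinom_zero_right, zbinom_of_neg]
  · obtain ⟨n, rfl⟩ : ∃ n : ℕ, k = n + 1 := ⟨(k - 1).toNat, by omega⟩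
    have h := Ring.choose_succ_succ (x - 1) n
    rw [sub_add_cancel] at h
    simp [zbinom, h, show (0 : ℤ) ≤ n + 1 by omega, show ((n : ℤ) + 1).toNat = n + 1 by omega]

/-- `a` ranges over `ℤ` so that the induction on `a` can start at `a = -1`. -/
noncomputable def binomSum (a : ℤ) (b c : ℕ) (y : ℤ) : ℤ :=
  ∑ j ∈ range (b + 1),
    zbinom b j * zbinom (y + a) (a - b + 1 + j) * zbinom (y + a + b + c - j) ((c : ℤ) - j)

noncomputable def binomClosed (a : ℤ) (b c : ℕ) (y : ℤ) : ℤ :=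
  zbinom (y + a + c) (a - b + c + 1) * zbinom (a + c + 1) c

lemma binomSum_succ (a : ℤ) (b c : ℕ) (y : ℤ) :
    binomSum a b (c + 1) y =
      binomSum a b c y + binomSum (a - 1) b (c + 1) y + binomSum a b (c + 1) (y - 1) := by
  simp only [binomSum, ← sum_add_distrib]
  refine sum_congr rfl fun j _ => ?_
  push_cast
  linear_combination (norm := ring_nf) zbinom b j *
    (zbinom (y + a) (a - b + 1 + j) * zbinom_pascal (y + a + b + (c + 1) - j) (c + 1 - j) +
      zbinom (y + a + b + c - j) (c + 1 - j) * zbinom_pascal (y + a) (a - b + 1 + j))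

lemma binomClosed_succ (a : ℤ) (b c : ℕ) (y : ℤ) :
    binomClosed a b (c + 1) y =
      binomClosed a b c y + binomClosed (a - 1) b (c + 1) y + binomClosed a b (c + 1) (y - 1) := by
  simp only [binomClosed]
  push_cast
  linear_combination (norm := ring_nf)
    zbinom_pascal (y + a + (c + 1)) (a - b + (c + 1) + 1) * zbinom (a + (c + 1) + 1) (c + 1) +
      zbinom (y + a + c) (a - b + c + 1) * zbinom_pascal (a + (c + 1) + 1) (c + 1)

lemma binomSum_eq_binomClosed_neg_one (b c : ℕ) (y : ℤ) :
    binomSum (-1) b c y = binomClosed (-1) b c y := by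
  rw [binomSum, sum_eq_single_of_mem b (self_mem_range_succ b)]
  · rw [binomClosed, show -1 - (b : ℤ) + 1 + b = 0 by ring, show -1 + (c : ℤ) + 1 = c by ring,
      show y + -1 + b + c - b = y + -1 + c by ring, show -1 - (b : ℤ) + c + 1 = c - b by ring,
      zbinom_zero_right, zbinom_self, zbinom_self]
    ring
  · intro j hj hjb
    rw [zbinom_of_neg (k := -1 - b + 1 + j) (by simp only [mem_range] at hj; omega), mul_zero,
      zero_mul]

lemma binomSum_eq_binomClosed_zero (a : ℤ) (b : ℕ) (y : ℤ) :
    binomSum a b 0 y = binomClosed a b 0 y := by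
  rw [binomSum, sum_eq_single_of_mem 0 (mem_range.2 b.succ_pos)]
  · simp [binomClosed, zbinom_zero_right]
  · intro j _ hj
    rw [zbinom_of_neg (k := (0 : ℕ) - j) (by omega), mul_zero]

lemma zbinom_natCast_mul_zbinom_natCast (n k : ℕ) {s : ℤ} (hsk : s ≤ k) :
    zbinom n k * zbinom k s = zbinom n s * zbinom (n - s) (k - s) := by
  rcases lt_or_ge s 0 with hs | hs
  · rw [zbinom_of_neg hs, zbinom_of_neg hs, mul_zero, zero_mul]
  lift s to ℕ using hs
  have hsk : s ≤ k := by exact_mod_cast hsk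
  rcases le_or_gt s n with hsn | hns
  · rw [← Nat.cast_sub hsn, ← Nat.cast_sub hsk, zbinom_natCast _ (Int.natCast_nonneg _),
      zbinom_natCast _ (Int.natCast_nonneg _), zbinom_natCast _ (Int.natCast_nonneg _),
      zbinom_natCast _ (Int.natCast_nonneg _)]
    simp only [Int.toNat_natCast]
    exact_mod_cast Nat.choose_mul hsk
  · rw [zbinom_natCast_of_lt (by omega : (n : ℤ) < k),
      zbinom_natCast_of_lt (by omega : (n : ℤ) < s), zero_mul, zero_mul]

lemma binomSum_eq_binomClosed_neg_self (a b c : ℕ) :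
    binomSum a b c (-a) = binomClosed a b c (-a) := by
  rw [binomSum, binomClosed, neg_add_cancel]
  rcases le_or_gt b a with hba | hab
  · rw [sum_eq_zero fun j _ => by rw [zbinom_zero_left (by omega), mul_zero, zero_mul], zero_add,
      zbinom_natCast_of_lt (by omega), zero_mul]
  obtain ⟨i, rfl⟩ := Nat.exists_eq_add_of_lt hab
  rw [sum_eq_single_of_mem i (mem_range.2 (by omega))]
  · have h := zbinom_natCast_mul_zbinom_natCast (a + c + 1) c (s := c - i) (by omega)
    push_cast at h ⊢
    rw [show (a : ℤ) + c + 1 - (c - i) = a + i + 1 by ring,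
      show (c : ℤ) - (c - i) = i by ring] at h
    rw [show (a : ℤ) - (a + i + 1) + 1 + i = 0 by ring, zbinom_zero_right,
      show (a : ℤ) - (a + i + 1) + c + 1 = c - i by ring,
      show (0 : ℤ) + (a + i + 1) + c - i = a + c + 1 by ring, zero_add]
    linear_combination -h
  · intro j hj hji
    rw [zbinom_zero_left (by omega), mul_zero, zero_mul]

lemma binomSum_eq_binomClosed_succ_right {n b c : ℕ}
    (hc : ∀ y, binomSum n b c y = binomClosed n b c y)
    (hn : ∀ y, binomSum ((n : ℤ) - 1) b (c + 1) y = binomClosed ((n : ℤ) - 1) b (c + 1) y)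
    (y : ℤ) : binomSum n b (c + 1) y = binomClosed n b (c + 1) y := by
  have hper : Function.Periodic
      (fun y => binomSum n b (c + 1) y - binomClosed n b (c + 1) y) 1 := fun y => by
    dsimp only
    rw [binomSum_succ, binomClosed_succ, hc, hn, add_sub_cancel_right]
    ring
  have h := hper.sub_int_mul_eq (y + n) (x := y)
  rw [Int.cast_id, show y - (y + n) * 1 = -n by ring, binomSum_eq_binomClosed_neg_self,
    sub_self] at h
  exact sub_eq_zero.1 h.symm

theorem binomSum_eq_binomClosed {a : ℤ} (ha : -1 ≤ a) (b c : ℕ) (y : ℤ) :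
    binomSum a b c y = binomClosed a b c y := by
  induction c generalizing a b y with
  | zero => exact binomSum_eq_binomClosed_zero a b y
  | succ c ihc =>
    induction a, ha using Int.leInduction generalizing b y with
    | base => exact binomSum_eq_binomClosed_neg_one b (c + 1) y
    | succ a ha iha =>
      obtain ⟨n, hn⟩ : ∃ n : ℕ, a + 1 = n := ⟨(a + 1).toNat, by omega⟩
      rw [hn]
      refine binomSum_eq_binomClosed_succ_right (fun y => ihc (by omega) b y) (fun y => ?_) y
      rw [← hn, add_sub_cancel_right]
      exact iha b y

/-- `∑_{j ≥ 0} binom(b,j) binom(y+a, a-b+1+j) binom(y+a+b+c-j, c-j)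
      = binom(y+a+c, a-b+c+1) binom(a+c+1, c)`,
for all integer values of `y` and nonnegative integers `a, b, c`.
The sum is finite: terms with `j > b` vanish, so it is taken over `0 ≤ j ≤ b`. -/
theorem stmt1 (y : ℤ) (a b c : ℕ) :
    ∑ j ∈ Finset.range (b + 1),
        zbinom b j * zbinom (y + a) ((a : ℤ) - b + 1 + j) *
          zbinom (y + a + b + c - j) ((c : ℤ) - j) =
      zbinom (y + a + c) ((a : ℤ) - b + c + 1) * zbinom ((a : ℤ) + c + 1) c :=
  binomSum_eq_binomClosed (by omega) b c y
end

section
/- Let d, t be natural numbers with 1 ≤ t, λ = (λ_t, …, λ_1) a weak composition of d-t+1 (i.e., λ_i ≥ 0 and ∑λ_i = d-t+1) and μ = (μ_{t+1}, …, μ_1) a weak composition of d-t. Define A_t(λ,μ) = ∏_{s=0}^{t-2} binom(∑_{m=1}^{s}(μ_m+λ_m) + μ_{s+1} + 2s, ∑_{m=1}^{s}(μ_m+λ_m) + λ_{s+1} + 2s) and g_t(λ,μ; 0) = binom(∑_{m=1}^{t-1}(μ_m+λ_m) + μ_t + 2(t-1), ∑_{m=1}^{t-1}(μ_m+λ_m)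 + λ_t + 2(t-1)). Then A_t(λ,μ) · g_t(λ,μ; 0) = 0. -/
open Finset

/-- `S(s) = ∑_{m=1}^{s} (μ_m + λ_m)`. -/
def Sfun (lam mu : ℕ → ℕ) (s : ℕ) : ℤ := ∑ m ∈ Finset.Icc 1 s, ((mu m : ℤ) + (lam m : ℤ))

/-- `A_k(λ,μ) = ∏_{s=0}^{k-2} binom(S(s)+μ_{s+1}+2s, S(s)+λ_{s+1}+2s)`. -/
noncomputable def Afun (lam mu : ℕ → ℕ) (k : ℕ) : ℤ :=
  ∏ s ∈ Finset.range (k - 1),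
    zbinom (Sfun lam mu s + (mu (s+1) : ℤ) + 2 * s) (Sfun lam mu s + (lam (s+1) : ℤ) + 2 * s)

/-- `B_k(λ,μ) = ∏_{s=k+1}^{t-1} binom(S(s-1)+μ_s+μ_{s+1}+2s-1, S(s)+2s-1)`. -/
noncomputable def Bfun (t : ℕ) (lam mu : ℕ → ℕ) (k : ℕ) : ℤ :=
  ∏ s ∈ Finset.Icc (k + 1) (t - 1),
    zbinom (Sfun lam mu (s - 1) + (mu s : ℤ) + (mu (s+1) : ℤ) + 2 * s - 1)
      (Sfun lam mu s + 2 * s - 1)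

/-- `g_k(λ,μ;z) = binom(S(k-1)+μ_k+2(k-1), S(k-1)+λ_k-z+2(k-1))`. -/
noncomputable def gfun (lam mu : ℕ → ℕ) (k : ℕ) (z : ℤ) : ℤ :=
  zbinom (Sfun lam mu (k - 1) + (mu k : ℤ) + 2 * ((k : ℤ) - 1))
    (Sfun lam mu (k - 1) + (lam k : ℤ) - z + 2 * ((k : ℤ) - 1))

/-- `h_k(λ,μ;z) = binom(S(k)+μ_{k+1}-z+2(k-1)+2, S(k)+2(k-1)+1)`. -/
noncomputable def hfun (lam mu : ℕ → ℕ) (k : ℕ) (z : ℤ) : ℤ :=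
  zbinom (Sfun lam mu k + (mu (k+1) : ℤ) - z + 2 * ((k : ℤ) - 1) + 2)
    (Sfun lam mu k + 2 * ((k : ℤ) - 1) + 1)

lemma zbinom_eq_zero {a b : ℤ} (ha : 0 ≤ a) (hab : a < b) : zbinom a b = 0 := by
  have hb : 0 ≤ b := ha.trans hab.le
  rw [zbinom, if_pos hb]
  have : a = ((a.toNat : ℕ) : ℤ) := (Int.toNat_of_nonneg ha).symm
  rw [this, Ring.choose_natCast]
  have hlt : a.toNat < b.toNat := by omega
  rw [Nat.choose_eq_zero_of_lt hlt, Nat.cast_zero]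

lemma Sfun_nonneg (lam mu : ℕ → ℕ) (s : ℕ) : 0 ≤ Sfun lam mu s :=
  Finset.sum_nonneg fun m _ => by positivity

/-- Lemma 3.1 (iv): `A_t(λ,μ) · g_t(λ,μ;0) = 0`. -/
theorem stmt7 (d t : ℕ) (ht : 1 ≤ t) (lam mu : ℕ → ℕ)
    (hlam : ∑ m ∈ Finset.Icc 1 t, (lam m : ℤ) = (d : ℤ) - t + 1)
    (hmu : ∑ m ∈ Finset.Icc 1 (t + 1), (mu m : ℤ) = (d : ℤ) - t) :
    Afun lam mu t * gfun lam mu t 0 = 0 := by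
  by_cases h : ∃ s ∈ Finset.range (t - 1), (mu (s+1) : ℤ) < (lam (s+1) : ℤ)
  · obtain ⟨s, hs, hlt⟩ := h
    have hz : zbinom (Sfun lam mu s + (mu (s+1) : ℤ) + 2 * s)
        (Sfun lam mu s + (lam (s+1) : ℤ) + 2 * s) = 0 := by
      apply zbinom_eq_zero
      · have := Sfun_nonneg lam mu s
        positivity
      · linarith
    rw [Afun, Finset.prod_eq_zero hs hz, zero_mul]
  · push_neg at h
    obtain ⟨t', rfl⟩ : ∃ t', t = t' + 1 := ⟨t - 1, by omega⟩
    simp only [Nat.add_sub_cancel] at h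
    have hsum : ∑ m ∈ Finset.Icc 1 t', (lam m : ℤ) ≤ ∑ m ∈ Finset.Icc 1 t', (mu m : ℤ) := by
      apply Finset.sum_le_sum
      intro m hm
      simp only [Finset.mem_Icc] at hm
      obtain ⟨s, rfl⟩ : ∃ s, m = s + 1 := ⟨m - 1, by omega⟩
      exact h s (Finset.mem_range.mpr (by omega))
    rw [Finset.sum_Icc_succ_top (by omega)] at hlam
    rw [Finset.sum_Icc_succ_top (by omega), Finset.sum_Icc_succ_top (by omega)] at hmu
    have hmt : (mu (t'+1) : ℤ) < (lam (t'+1) : ℤ) := by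
      have h1 : (0 : ℤ) ≤ (mu (t'+2) : ℤ) := Nat.cast_nonneg _
      push_cast at hlam hmu ⊢
      linarith
    have hg : gfun lam mu (t'+1) 0 = 0 := by
      rw [gfun]
      simp only [Nat.add_sub_cancel]
      push_cast
      apply zbinom_eq_zero
      · have h1 := Sfun_nonneg lam mu t'
        have h2 : (0:ℤ) ≤ (mu (t'+1) : ℤ) := Nat.cast_nonneg _
        have h3 : (0:ℤ) ≤ (t' : ℤ) := Nat.cast_nonneg _
        linarith
      · linarith
    rw [hg, mul_zero]
end

section
/- With A_k, B_k, g_k, h_k defined as in Lemma 3.1 for weak compositions λ of d-t+1 (with t parts) and μ of d-t (with t+1 parts), the following identity holds: ∑_{k=1}^{t-1} (-1)^{t-k} A_k(λ,μ) B_k(λ,μ) [ h_k(λ,μ; λ_k+1) g_k(λ,μ; λ_k+1) + g_k(λ,μ; 0) h_k(λ,μ; 0) ] = - A_t(λ,μ) · g_t(λ,μ; λ_t + 1). -/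
open Finset

lemma Sfun_eq (lam mu : ℕ → ℕ) (k : ℕ) (hk : 1 ≤ k) :
    Sfun lam mu k = Sfun lam mu (k - 1) + (mu k : ℤ) + (lam k : ℤ) := by
  obtain ⟨j, rfl⟩ := Nat.exists_eq_add_of_le hk
  unfold Sfun
  rw [show 1+j-1 = j by omega, show 1+j = j+1 by omega, Finset.sum_Icc_succ_top (by omega)]
  ring

lemma telescope (G : ℕ → ℤ) (n : ℕ) :
    ∑ k ∈ Finset.Icc 1 n, (-1:ℤ)^(n+1-k) * (G k + G (k+1))
      = (-1:ℤ)^n * G 1 - G (n+1) := by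
  induction n with
  | zero => simp
  | succ n ih =>
    rw [Finset.sum_Icc_succ_top (by omega)]
    have h1 : ∀ k ∈ Finset.Icc 1 n,
        (-1:ℤ)^(n+1+1-k) * (G k + G (k+1)) = -((-1:ℤ)^(n+1-k) * (G k + G (k+1))) := by
      intro k hk
      simp only [Finset.mem_Icc] at hk
      rw [show n+1+1-k = (n+1-k)+1 by omega, pow_succ]
      ring
    rw [Finset.sum_congr rfl h1, Finset.sum_neg_distrib, ih,
      show n+1+1-(n+1) = 1 by omega, pow_succ]
    ring

lemma prod_Icc_cons (f : ℕ → ℤ) (a b : ℕ) (h : a ≤ b) :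
    ∏ s ∈ Finset.Icc a b, f s = f a * ∏ s ∈ Finset.Icc (a+1) b, f s := by
  rw [show Finset.Icc a b = insert a (Finset.Icc (a+1) b) by
    ext x; simp only [Finset.mem_insert, Finset.mem_Icc]; omega,
    Finset.prod_insert (by simp)]

/-- Lemma 3.2: `∑_{k=1}^{t-1} (-1)^{t-k} A_k B_k [h_k(λ_k+1) g_k(λ_k+1) + g_k(0) h_k(0)]
  = - A_t · g_t(λ_t+1)`. -/
theorem stmt8 (d t : ℕ) (ht : 1 ≤ t) (lam mu : ℕ → ℕ)
    (hlam : ∑ m ∈ Finset.Icc 1 t, (lam m : ℤ) = (d : ℤ) - t + 1)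
    (hmu : ∑ m ∈ Finset.Icc 1 (t + 1), (mu m : ℤ) = (d : ℤ) - t) :
    ∑ k ∈ Finset.Icc 1 (t - 1), (-1 : ℤ) ^ (t - k) * (Afun lam mu k * Bfun t lam mu k *
        (hfun lam mu k ((lam k : ℤ) + 1) * gfun lam mu k ((lam k : ℤ) + 1) +
          gfun lam mu k 0 * hfun lam mu k 0)) =
      -(Afun lam mu t * gfun lam mu t ((lam t : ℤ) + 1)) := by
  set F : ℕ → ℤ := fun k =>
    Afun lam mu k * Bfun t lam mu (k - 1) * gfun lam mu k ((lam k : ℤ) + 1) with hF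
  -- h_k(0) = g_{k+1}(λ_{k+1}+1)
  have hhg : ∀ k : ℕ, 1 ≤ k → hfun lam mu k 0 = gfun lam mu (k+1) ((lam (k+1) : ℤ) + 1) := by
    intro k hk
    unfold hfun gfun
    rw [Nat.add_sub_cancel]
    congr 1 <;> push_cast <;> ring
  -- A_{k+1} = A_k * g_k(0)
  have hA : ∀ k : ℕ, 1 ≤ k → Afun lam mu (k+1) = Afun lam mu k * gfun lam mu k 0 := by
    intro k hk
    obtain ⟨j, rfl⟩ := Nat.exists_eq_add_of_le hk
    unfold Afun gfun
    rw [show 1 + j + 1 - 1 = j + 1 by omega, Finset.prod_range_succ,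
      show 1 + j - 1 = j by omega]
    congr 2 <;> (congr 1 <;> push_cast <;> ring_nf)
  -- For 1 ≤ k ≤ t-1, the summand equals F k + F (k+1)
  have hterm : ∀ k ∈ Finset.Icc 1 (t-1),
      Afun lam mu k * Bfun t lam mu k *
        (hfun lam mu k ((lam k : ℤ) + 1) * gfun lam mu k ((lam k : ℤ) + 1) +
          gfun lam mu k 0 * hfun lam mu k 0) = F k + F (k+1) := by
    intro k hk
    simp only [Finset.mem_Icc] at hk
    obtain ⟨hk1, hk2⟩ := hk
    -- B_{k-1} = b_k * B_k
    have hB : Bfun t lam mu (k-1) = zbinom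
        (Sfun lam mu (k - 1) + (mu k : ℤ) + (mu (k+1) : ℤ) + 2 * k - 1)
        (Sfun lam mu k + 2 * k - 1) * Bfun t lam mu k := by
      unfold Bfun
      rw [show k - 1 + 1 = k from by omega, prod_Icc_cons _ k (t-1) hk2]
    -- h_k(λ_k+1) = b_k
    have hh : hfun lam mu k ((lam k : ℤ) + 1) = zbinom
        (Sfun lam mu (k - 1) + (mu k : ℤ) + (mu (k+1) : ℤ) + 2 * k - 1)
        (Sfun lam mu k + 2 * k - 1) := by
      unfold hfun
      rw [Sfun_eq lam mu k hk1]
      congr 1 <;> push_cast <;> ring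
    have hFk1 : F (k+1) = Afun lam mu k * gfun lam mu k 0 * Bfun t lam mu k *
        gfun lam mu (k+1) ((lam (k+1) : ℤ) + 1) := by
      rw [hF]
      simp only [Nat.add_sub_cancel]
      rw [hA k hk1]
    rw [hFk1, hF]
    simp only
    rw [hB, hh, hhg k hk1]
    ring
  rw [Finset.sum_congr rfl (fun k hk => by rw [hterm k hk])]
  -- telescoping
  obtain ⟨n, rfl⟩ : ∃ n, t = n + 1 := ⟨t - 1, by omega⟩
  have := telescope F n
  rw [show (Finset.Icc 1 (n+1-1)) = Finset.Icc 1 n by norm_num] at *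
  rw [Finset.sum_congr rfl (fun k hk => by
      simp only [Finset.mem_Icc] at hk
      rw [show n + 1 - k = n + 1 - k from rfl]), this]
  -- F 1 = 0
  have hF1 : F 1 = 0 := by
    have : gfun lam mu 1 ((lam 1 : ℤ) + 1) = 0 := by
      unfold gfun zbinom
      rw [if_neg]
      have : Sfun lam mu (1-1) = 0 := by simp [Sfun]
      rw [this]
      omega
    simp [hF, this]
  rw [hF1]
  have hBt : Bfun (n+1) lam mu (n+1-1) = 1 := by
    unfold Bfun
    rw [show Finset.Icc (n+1-1+1) (n+1-1) = ∅ by simp]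
    simp
  simp only [hF, hBt, mul_one] at *
  ring
end

section
/- Let λ = (λ_t, …, λ_1) and μ = (μ_t, …, μ_1) be weak compositions of the same number N with t parts. If the integer ∏_{s=0}^{t-2} binom(∑_{j=1}^{s}(λ_j+μ_j) + μ_{s+1} + 2s, ∑_{j=1}^{s}(λ_j+μ_j) + λ_{s+1} + 2s) is nonzero, then μ_j ≥ λ_j for all 1 ≤ j ≤ t-1, and consequently either λ = μ, or (μ_j ≥ λ_j for all j ≤ t-1, μ_j > λ_j for some j ≤ t-1, and μ_t < λ_t). -/
open Finset

lemma zbinom_ne_zero_le {a b : ℤ} (ha : 0 ≤ a) (hb : 0 ≤ b) (h : zbinom a b ≠ 0) : b ≤ a := by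
  rw [zbinom, if_pos hb] at h
  obtain ⟨n, rfl⟩ := Int.eq_ofNat_of_zero_le ha
  rw [Ring.choose_natCast] at h
  have : b.toNat ≤ n := by
    by_contra hc
    exact h (by exact_mod_cast Nat.choose_eq_zero_of_lt (by omega))
  omega

/-- The key computation in Lemma 3.4: if the product
`∏_{s=0}^{t-2} binom(∑_{j≤s}(λ_j+μ_j)+μ_{s+1}+2s, ∑_{j≤s}(λ_j+μ_j)+λ_{s+1}+2s)` is nonzero
for weak compositions `λ, μ` of the same number `N` with `t` parts, then `μ_j ≥ λ_j` for
`1 ≤ j ≤ t-1`, and consequently either `λ = μ` or (`μ_j ≥ λ_j` for all `j ≤ t-1`, `μ_j > λ_j`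
for some `j ≤ t-1`, and `μ_t < λ_t`). -/
theorem stmt9 (t N : ℕ) (ht : 1 ≤ t) (lam mu : ℕ → ℕ)
    (hlam : ∑ m ∈ Finset.Icc 1 t, lam m = N)
    (hmu : ∑ m ∈ Finset.Icc 1 t, mu m = N)
    (hne : Afun lam mu t ≠ 0) :
    (∀ j ∈ Finset.Icc 1 (t - 1), lam j ≤ mu j) ∧
      ((∀ j ∈ Finset.Icc 1 t, lam j = mu j) ∨
        ((∀ j ∈ Finset.Icc 1 (t - 1), lam j ≤ mu j) ∧
          (∃ j ∈ Finset.Icc 1 (t - 1), lam j < mu j) ∧ mu t < lam t)) := by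
  have key : ∀ j ∈ Finset.Icc 1 (t - 1), lam j ≤ mu j := by
    intro j hj
    simp only [Finset.mem_Icc] at hj
    rw [Afun, Finset.prod_ne_zero_iff] at hne
    have hs : j - 1 ∈ Finset.range (t - 1) := Finset.mem_range.mpr (by omega)
    have h := hne _ hs
    have hS := Sfun_nonneg lam mu (j - 1)
    have hle := zbinom_ne_zero_le (a := Sfun lam mu (j-1) + (mu (j-1+1) : ℤ) + 2 * ((j-1 : ℕ) : ℤ))
      (b := Sfun lam mu (j-1) + (lam (j-1+1) : ℤ) + 2 * ((j-1 : ℕ) : ℤ)) (by positivity) (by positivity) h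
    have hj1 : j - 1 + 1 = j := by omega
    rw [hj1] at hle
    omega
  refine ⟨key, ?_⟩
  by_cases hall : ∀ j ∈ Finset.Icc 1 t, lam j = mu j
  · exact Or.inl hall
  · right
    have hsplit : Finset.Icc 1 t = insert t (Finset.Icc 1 (t - 1)) := by
      ext x; simp [Finset.mem_Icc]; omega
    have hnott : t ∉ Finset.Icc 1 (t - 1) := by simp; omega
    rw [hsplit, Finset.sum_insert hnott] at hlam hmu
    have hsumle : ∑ j ∈ Finset.Icc 1 (t - 1), lam j ≤ ∑ j ∈ Finset.Icc 1 (t - 1), mu j :=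
      Finset.sum_le_sum key
    rcases eq_or_lt_of_le hsumle with heq | hlt
    · exfalso
      apply hall
      intro j hj
      rcases eq_or_ne j t with rfl | hjt
      · omega
      · have hj' : j ∈ Finset.Icc 1 (t - 1) := by
          simp only [Finset.mem_Icc] at hj ⊢; omega
        exact (Finset.sum_eq_sum_iff_of_le key).mp heq j hj'
    · refine ⟨key, ?_, by omega⟩
      by_contra hc
      push_neg at hc
      have : ∑ j ∈ Finset.Icc 1 (t - 1), mu j ≤ ∑ j ∈ Finset.Icc 1 (t - 1), lam j :=
        Finset.sum_le_sum hc
      omega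
end

section
/- Let R be the ring of integer-valued polynomials. For d ≥ 1 and the arithmetic complex C_•(x, 1^d) over R with C_k = R^{binom(d,k)} indexed by weak compositions and differential ∂_k(f_{(λ_t,…,λ_1)}) = ∑_{j=1}^{t} ∑_{i=1}^{λ_j} (-1)^{t-j} binom(ω(I_{λ_j}), ω(I_{λ_j} \ {i})) f_{(λ_t,…,λ_{j+1}, i-1, λ_j - i, λ_{j-1},…,λ_1)} (where vertex weights are w_0 = x, w_1 = ⋯ = w_d = 1), the composition ∂_{k-1} ∘ ∂_k = 0; that is, C_•(x, 1^d) is a chain complex. -/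
/-!
The coefficient of `f_ν` in `∂ ∂ f_λ` is a sum over pairs of successive cuts of `λ`. Cutting at
two edges in either order gives the same composition `ν`, and the two resulting terms cancel. For
cuts in different intervals the binomial coefficients agree and only the signs `(-1)^{t-j}` differ.
For two cuts in one interval of weight `w`, the products of binomials agree by trinomial revision
`binom(w, a) binom(a, b) = binom(w, b) binom(w - b, a - b)`, and again the signs are opposite.
Exchanging the order of the two cuts is a fixed-point-free involution, so the sum vanishes.
-/

open Finset

/-- Reindexing of a tuple `f : Fin n → ℕ` (with `f ⟨m-1⟩` giving the part with subscript
`m`) as a function `ℕ → ℕ` supported on `{1, …, n}`. -/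
def toFun (n : ℕ) (f : Fin n → ℕ) : ℕ → ℕ :=
  fun m => if h : 1 ≤ m ∧ m ≤ n then f ⟨m - 1, by omega⟩ else 0

/-- The weak composition `(λ_t, …, λ_{j+1}, i-1, λ_j - i, λ_{j-1}, …, λ_1)` (with `t+1`
parts, subscripts `1, …, t+1`) obtained from `λ = (λ_t, …, λ_1)` by splitting the `j`-th
interval at its `i`-th edge. -/
def split (lam : ℕ → ℕ) (j i : ℕ) : ℕ → ℕ := fun m =>
  if m < j then lam m else if m = j then lam j - i else if m = j + 1 then i - 1 else lam (m - 1)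

/-- The coefficient of `f_ν` in `∂(f_λ)`, for the arithmetic complex `C_•(w_0, 1^d)` with
`w_0 = x`: the differential is
`∂(f_{(λ_t,…,λ_1)}) = ∑_{j=1}^{t} ∑_{i=1}^{λ_j} (-1)^{t-j} binom(ω(I_{λ_j}), ω(I_{λ_j}∖{i}))
f_{(λ_t,…,λ_{j+1},i-1,λ_j-i,λ_{j-1},…,λ_1)}`,
where `λ` has `t` parts, `ω(I_{λ_j}) = λ_j + 1` for `j < t` and `x + λ_t` for `j = t`
(the leftmost interval contains the vertex of weight `w_0 = x`), and
`ω(I_{λ_j}∖{i}) = λ_j - i + 1`. -/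
noncomputable def Dmat (x : ℤ) (t : ℕ) (nu lam : ℕ → ℕ) : ℤ :=
  ∑ j ∈ Finset.Icc 1 t, ∑ i ∈ Finset.Icc 1 (lam j),
    if ∀ m ∈ Finset.Icc 1 (t + 1), nu m = split lam j i m then
      (-1 : ℤ) ^ (t - j) *
        (if j = t then zbinom (x + (lam t : ℤ)) ((lam t : ℤ) - i + 1)
          else zbinom ((lam j : ℤ) + 1) ((lam j : ℤ) - i + 1))
    else 0

/-- The coefficient of `f_μ` in `α(f_λ)`, for weak compositions `λ, μ` with `t` parts:
`(-1)^{d-μ_t} ∏_{s=0}^{t-2} binom(∑_{j≤s}(λ_j+μ_j)+μ_{s+1}+2s, ∑_{j≤s}(λ_j+μ_j)+λ_{s+1}+2s)`. -/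
noncomputable def Amat (d t : ℕ) (lam mu : ℕ → ℕ) : ℤ :=
  (-1 : ℤ) ^ (d - mu t) * Afun lam mu t

section Split

variable {L : ℕ → ℕ} {t j i m : ℕ}

theorem split_apply_of_lt (h : m < j) : split L j i m = L m := if_pos h

theorem split_apply_self : split L j i j = L j - i := by simp [split]

theorem split_apply_succ : split L j i (j + 1) = i - 1 := by simp [split]

theorem split_apply_of_succ_lt (h : j + 1 < m) : split L j i m = L (m - 1) := by
  simp only [split]
  rw [if_neg (by omega), if_neg (by omega), if_neg (by omega)]

theorem split_split_of_lt {j₁ i₁ j₂ i₂ : ℕ} (h : j₂ < j₁) :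
    split (split L j₁ i₁) j₂ i₂ = split (split L j₂ i₂) (j₁ + 1) i₁ := by
  funext m
  simp only [split]
  split_ifs <;> first | rfl | omega

theorem split_split_self {i₁ i₂ : ℕ} :
    split (split L j i₁) j i₂ = split (split L j (i₁ + i₂)) (j + 1) i₁ := by
  funext m
  simp only [split]
  split_ifs <;> first | rfl | omega

theorem split_eq_zero_of_notMem (hL : ∀ m ∉ Icc 1 t, L m = 0) (hj : j ∈ Icc 1 t)
    (hm : m ∉ Icc 1 (t + 1)) : split L j i m = 0 := by
  simp only [mem_Icc, not_and_or, not_le] at hj hm hL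
  rcases hm with hm | hm
  · rw [split_apply_of_lt (by omega)]; exact hL m (by omega)
  · rw [split_apply_of_succ_lt (by omega)]; exact hL (m - 1) (by omega)

theorem sum_split_add_one (hj : j ∈ Icc 1 t) (hi : i ∈ Icc 1 (L j)) :
    ∑ m ∈ Icc 1 (t + 1), split L j i m + 1 = ∑ m ∈ Icc 1 t, L m := by
  rw [mem_Icc] at hj hi
  induction t, hj.2 using Nat.le_induction with
  | base =>
    obtain ⟨j, rfl⟩ : ∃ j', j = j' + 1 := ⟨j - 1, by omega⟩
    have hlow : ∑ m ∈ Icc 1 j, split L (j + 1) i m = ∑ m ∈ Icc 1 j, L m :=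
      sum_congr rfl fun m hm => split_apply_of_lt (by simp at hm; omega)
    rw [sum_Icc_succ_top (by omega), sum_Icc_succ_top (by omega), sum_Icc_succ_top (by omega),
      hlow, split_apply_self, split_apply_succ]
    omega
  | succ t hjt ih =>
    rw [sum_Icc_succ_top (by omega) (split L j i), sum_Icc_succ_top (by omega) L,
      split_apply_of_succ_lt (by omega), ← ih ⟨hj.1, hjt⟩]
    simp only [add_tsub_cancel_right]
    omega

end Split

section ToFun

variable {n : ℕ}

theorem toFun_eq_zero_of_notMem (f : Fin n → ℕ) {m : ℕ} (hm : m ∉ Icc 1 n) : toFun n f m = 0 :=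
  dif_neg (by simpa using hm)

theorem toFun_succ (f : Fin n → ℕ) (a : Fin n) : toFun n f (a + 1) = f a := by
  simp [toFun]

theorem toFun_eqOn_iff (mu : Fin n → ℕ) (f : ℕ → ℕ) :
    (∀ m ∈ Icc 1 n, toFun n mu m = f m) ↔ mu = fun a : Fin n => f (a + 1) := by
  constructor
  · intro h
    funext a
    rw [← h (a + 1) (by simp), toFun_succ]
  · rintro rfl m hm
    rw [mem_Icc] at hm
    simp [toFun, hm, Nat.sub_add_cancel hm.1]

theorem toFun_succ_eq_self {f : ℕ → ℕ} (hf : ∀ m ∉ Icc 1 n, f m = 0) :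
    toFun n (fun a : Fin n => f (a + 1)) = f := by
  funext m
  by_cases hm : m ∈ Icc 1 n
  · rw [mem_Icc] at hm
    simp [toFun, hm, Nat.sub_add_cancel hm.1]
  · rw [toFun_eq_zero_of_notMem _ hm, hf m hm]

theorem sum_fin_succ_eq_sum_Icc (f : ℕ → ℕ) : ∑ a : Fin n, f (a + 1) = ∑ m ∈ Icc 1 n, f m := by
  rw [Fin.sum_univ_eq_sum_range (fun m => f (m + 1)), ← Nat.Ico_zero_eq_range, sum_Ico_add',
    zero_add, Ico_add_one_right_eq_Icc]

theorem sum_toFun (f : Fin n → ℕ) : ∑ m ∈ Icc 1 n, toFun n f m = ∑ a, f a := by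
  simp only [← sum_fin_succ_eq_sum_Icc, toFun_succ]

end ToFun

theorem zbinom_mul_zbinom (w : ℤ) {a b : ℤ} (hb : 0 ≤ b) (hba : b ≤ a) :
    zbinom w a * zbinom a b = zbinom w b * zbinom (w - b) (a - b) := by
  lift a to ℕ using hb.trans hba
  lift b to ℕ using hb
  have hba : b ≤ a := by exact_mod_cast hba
  have hsub : ((a : ℤ) - b).toNat = a - b := by omega
  simp only [zbinom, Nat.cast_nonneg, sub_nonneg.mpr (Nat.cast_le.mpr hba), if_true,
    Int.toNat_natCast, hsub, Ring.choose_natCast]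
  rw [mul_comm, ← nsmul_eq_mul, Ring.choose_smul_choose w hba]

section Coef

variable (x : ℤ) {L : ℕ → ℕ} {t j : ℕ}

/-- `ω(I_j)`: the leftmost interval (`j = t`) contains the vertex of weight `x`. -/
def intervalWeight (t : ℕ) (L : ℕ → ℕ) (j : ℕ) : ℤ := if j = t then x + L j else L j + 1

/-- The coefficient of `f_{split L j i}` in `∂ f_L`. -/
noncomputable def coef (t : ℕ) (L : ℕ → ℕ) (j i : ℕ) : ℤ :=
  (-1) ^ (t - j) * zbinom (intervalWeight x t L j) ((L j : ℤ) - i + 1)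

theorem coef_split_of_lt {j₁ i₁ j₂ : ℕ} (h : j₂ < j₁) (hj₁ : j₁ ≤ t) (i₂ : ℕ) :
    coef x (t + 1) (split L j₁ i₁) j₂ i₂ = -coef x t L j₂ i₂ := by
  simp only [coef, intervalWeight, split_apply_of_lt h, if_neg (by omega : j₂ ≠ t + 1),
    if_neg (by omega : j₂ ≠ t), show t + 1 - j₂ = t - j₂ + 1 by omega, pow_succ]
  ring

theorem coef_split_of_gt {j₁ i₁ j₂ i₂ : ℕ} (h : j₂ < j₁) :
    coef x (t + 1) (split L j₂ i₂) (j₁ + 1) i₁ = coef x t L j₁ i₁ := by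
  have hL : split L j₂ i₂ (j₁ + 1) = L j₁ := split_apply_of_succ_lt (by omega)
  simp only [coef, intervalWeight, hL, Nat.add_sub_add_right, Nat.add_right_cancel_iff]

theorem coef_pair_cancel_of_lt {j₁ i₁ j₂ i₂ : ℕ} (h : j₂ < j₁) (hj₁ : j₁ ≤ t) :
    coef x (t + 1) (split L j₁ i₁) j₂ i₂ * coef x t L j₁ i₁
      + coef x (t + 1) (split L j₂ i₂) (j₁ + 1) i₁ * coef x t L j₂ i₂ = 0 := by
  rw [coef_split_of_lt x h hj₁, coef_split_of_gt x h]
  ring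

theorem coef_pair_cancel_self {i₁ i₂ : ℕ} (hj : j ≤ t) (hi₁ : 1 ≤ i₁) (hi : i₁ + i₂ ≤ L j) :
    coef x (t + 1) (split L j i₁) j i₂ * coef x t L j i₁
      + coef x (t + 1) (split L j (i₁ + i₂)) (j + 1) i₁ * coef x t L j (i₁ + i₂) = 0 := by
  set w := intervalWeight x t L j
  set a : ℤ := L j - i₁ + 1
  set b : ℤ := L j - i₁ - i₂ + 1
  have hsign : (-1 : ℤ) ^ (t + 1 - j) = -(-1) ^ (t - j) := by
    rw [show t + 1 - j = t - j + 1 by omega, pow_succ]; ring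
  have h₁ : coef x (t + 1) (split L j i₁) j i₂ = -(-1) ^ (t - j) * zbinom a b := by
    simp only [coef, intervalWeight, split_apply_self, if_neg (by omega : j ≠ t + 1), hsign]
    congr 2 <;> push_cast [Nat.cast_sub (by omega : i₁ ≤ L j)] <;> ring
  have h₂ : coef x (t + 1) (split L j (i₁ + i₂)) (j + 1) i₁
      = (-1) ^ (t - j) * zbinom (w - b) (a - b) := by
    simp only [coef, intervalWeight, split_apply_succ, Nat.add_sub_add_right,
      Nat.add_right_cancel_iff, w]
    congr 2
    · split_ifs <;> push_cast [Nat.cast_sub (by omega : 1 ≤ i₁ + i₂)] <;> ring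
    · push_cast [Nat.cast_sub (by omega : 1 ≤ i₁ + i₂)]; ring
  have h₃ : coef x t L j (i₁ + i₂) = (-1) ^ (t - j) * zbinom w b := by
    simp only [coef, w]; congr 2; push_cast; ring
  have h₀ : coef x t L j i₁ = (-1) ^ (t - j) * zbinom w a := rfl
  rw [h₀, h₁, h₂, h₃]
  linear_combination
    -((-1 : ℤ) ^ (t - j)) ^ 2 * zbinom_mul_zbinom w (a := a) (b := b) (by omega) (by omega)

end Coef

/-- Reducible, so that `Decidable (SplitEq …)` resolves to the instance used in `Dmat`. -/
abbrev SplitEq (t : ℕ) (nu L : ℕ → ℕ) (j i : ℕ) : Prop :=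
  ∀ m ∈ Icc 1 (t + 1), nu m = split L j i m

/-- `⟨j, i⟩` cuts the `j`-th interval of `L` at its `i`-th edge. -/
def cuts (t : ℕ) (L : ℕ → ℕ) : Finset (Σ _ : ℕ, ℕ) := (Icc 1 t).sigma fun j => Icc 1 (L j)

theorem Dmat_eq_sum_cuts (x : ℤ) (t : ℕ) (nu L : ℕ → ℕ) :
    Dmat x t nu L = ∑ c ∈ cuts t L, if SplitEq t nu L c.1 c.2 then coef x t L c.1 c.2 else 0 := by
  rw [cuts, sum_sigma]
  refine sum_congr rfl fun j _ => sum_congr rfl fun i _ => ?_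
  dsimp only [coef, intervalWeight]
  split_ifs with _ hjt
  · subst hjt; rfl
  all_goals rfl

theorem sum_Dmat_toFun_mul_Dmat (x : ℤ) {t k : ℕ} (nu : ℕ → ℕ) {L : ℕ → ℕ}
    (hL : ∀ m ∉ Icc 1 t, L m = 0) (hsum : ∑ m ∈ Icc 1 t, L m = k) :
    ∑ mu ∈ Nat.antidiagonalTuple (t + 1) (k - 1),
        Dmat x (t + 1) nu (toFun (t + 1) mu) * Dmat x t (toFun (t + 1) mu) L
      = ∑ c ∈ cuts t L, Dmat x (t + 1) nu (split L c.1 c.2) * coef x t L c.1 c.2 := by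
  simp_rw [Dmat_eq_sum_cuts x t _ L, mul_sum, mul_ite, mul_zero]
  rw [sum_comm]
  refine sum_congr rfl fun c hc => ?_
  obtain ⟨hj, hi⟩ := mem_sigma.1 hc
  set mu₀ : Fin (t + 1) → ℕ := fun a => split L c.1 c.2 (a + 1)
  have hmu₀ : mu₀ ∈ Nat.antidiagonalTuple (t + 1) (k - 1) := by
    have := sum_split_add_one hj hi
    rw [Nat.mem_antidiagonalTuple, sum_fin_succ_eq_sum_Icc (split L c.1 c.2)]
    omega
  rw [sum_eq_single mu₀ (fun mu _ hne => if_neg (mt (toFun_eqOn_iff mu _).1 hne))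
      (fun h => absurd hmu₀ h), if_pos ((toFun_eqOn_iff mu₀ _).2 rfl),
    toFun_succ_eq_self fun m hm => split_eq_zero_of_notMem hL hj hm]

def doubleCuts (t : ℕ) (L : ℕ → ℕ) : Finset (Σ _ : Σ _ : ℕ, ℕ, Σ _ : ℕ, ℕ) :=
  (cuts t L).sigma fun c => cuts (t + 1) (split L c.1 c.2)

theorem mem_doubleCuts {t : ℕ} {L : ℕ → ℕ} {j₁ i₁ j₂ i₂ : ℕ} :
    ⟨⟨j₁, i₁⟩, ⟨j₂, i₂⟩⟩ ∈ doubleCuts t L ↔ (1 ≤ j₁ ∧ j₁ ≤ t) ∧ (1 ≤ i₁ ∧ i₁ ≤ L j₁) ∧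
      (1 ≤ j₂ ∧ j₂ ≤ t + 1) ∧ (1 ≤ i₂ ∧ i₂ ≤ split L j₁ i₁ j₂) := by
  simp only [doubleCuts, cuts, mem_sigma, mem_Icc, and_assoc]

/-- The contribution of `f_L ↦ f_{split L c} ↦ f_{split (split L c) c'}` to the coefficient of
`f_nu` in `∂ ∂ f_L`. -/
noncomputable def doubleSplitTerm (x : ℤ) (t : ℕ) (nu L : ℕ → ℕ)
    (e : Σ _ : Σ _ : ℕ, ℕ, Σ _ : ℕ, ℕ) : ℤ :=
  if SplitEq (t + 1) nu (split L e.1.1 e.1.2) e.2.1 e.2.2 then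
    coef x (t + 1) (split L e.1.1 e.1.2) e.2.1 e.2.2 * coef x t L e.1.1 e.1.2
  else 0

theorem sum_Dmat_split_mul_coef (x : ℤ) (t : ℕ) (nu L : ℕ → ℕ) :
    ∑ c ∈ cuts t L, Dmat x (t + 1) nu (split L c.1 c.2) * coef x t L c.1 c.2
      = ∑ e ∈ doubleCuts t L, doubleSplitTerm x t nu L e := by
  rw [doubleCuts, sum_sigma]
  refine sum_congr rfl fun c _ => ?_
  simp only [Dmat_eq_sum_cuts, sum_mul, ite_mul, zero_mul]
  rfl

/-- Cutting `L` at two edges in either order gives the same composition; `swapCuts` exchanges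
the two orders. -/
def swapCuts : (Σ _ : Σ _ : ℕ, ℕ, Σ _ : ℕ, ℕ) → Σ _ : Σ _ : ℕ, ℕ, Σ _ : ℕ, ℕ
  | ⟨⟨j₁, i₁⟩, ⟨j₂, i₂⟩⟩ =>
    if j₂ < j₁ then ⟨⟨j₂, i₂⟩, ⟨j₁ + 1, i₁⟩⟩
    else if j₂ = j₁ then ⟨⟨j₁, i₁ + i₂⟩, ⟨j₁ + 1, i₁⟩⟩
    else if j₂ = j₁ + 1 then ⟨⟨j₁, i₂⟩, ⟨j₁, i₁ - i₂⟩⟩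
    else ⟨⟨j₂ - 1, i₂⟩, ⟨j₁, i₁⟩⟩

theorem swapCuts_ne (e : Σ _ : Σ _ : ℕ, ℕ, Σ _ : ℕ, ℕ) : swapCuts e ≠ e := by
  obtain ⟨⟨j₁, i₁⟩, ⟨j₂, i₂⟩⟩ := e
  simp only [swapCuts]
  split_ifs <;> simp <;> omega

theorem swapCuts_mem {t : ℕ} {L : ℕ → ℕ} {e : Σ _ : Σ _ : ℕ, ℕ, Σ _ : ℕ, ℕ}
    (he : e ∈ doubleCuts t L) : swapCuts e ∈ doubleCuts t L := by
  obtain ⟨⟨j₁, i₁⟩, ⟨j₂, i₂⟩⟩ := e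
  rw [mem_doubleCuts] at he
  simp only [swapCuts]
  split_ifs <;> simp only [mem_doubleCuts, split, Nat.add_sub_cancel] at he ⊢ <;>
    split_ifs at he ⊢ <;> omega

theorem swapCuts_swapCuts {t : ℕ} {L : ℕ → ℕ} {e : Σ _ : Σ _ : ℕ, ℕ, Σ _ : ℕ, ℕ}
    (he : e ∈ doubleCuts t L) : swapCuts (swapCuts e) = e := by
  obtain ⟨⟨j₁, i₁⟩, ⟨j₂, i₂⟩⟩ := e
  rw [mem_doubleCuts] at he
  have hi : j₂ = j₁ + 1 → i₂ < i₁ := by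
    rintro rfl
    have := he.2.2.2.2
    rw [split_apply_succ] at this
    omega
  simp only [swapCuts]
  split_ifs <;> dsimp only at * <;>
    simp only [Sigma.mk.injEq, heq_eq_eq, and_true, true_and] <;> omega

section Cancellation

variable {x : ℤ} {t : ℕ} {nu L : ℕ → ℕ} {e : Σ _ : Σ _ : ℕ, ℕ, Σ _ : ℕ, ℕ}

theorem doubleSplitTerm_add_eq_zero {e' : Σ _ : Σ _ : ℕ, ℕ, Σ _ : ℕ, ℕ}
    (hsplit : split (split L e.1.1 e.1.2) e.2.1 e.2.2
      = split (split L e'.1.1 e'.1.2) e'.2.1 e'.2.2)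
    (hcoef : coef x (t + 1) (split L e.1.1 e.1.2) e.2.1 e.2.2 * coef x t L e.1.1 e.1.2
      + coef x (t + 1) (split L e'.1.1 e'.1.2) e'.2.1 e'.2.2 * coef x t L e'.1.1 e'.1.2 = 0) :
    doubleSplitTerm x t nu L e + doubleSplitTerm x t nu L e' = 0 := by
  unfold doubleSplitTerm SplitEq
  rw [hsplit]
  split_ifs
  exacts [hcoef, add_zero 0]

theorem doubleSplitTerm_add_swapCuts_of_le (he : e ∈ doubleCuts t L) (h : e.2.1 ≤ e.1.1) :
    doubleSplitTerm x t nu L e + doubleSplitTerm x t nu L (swapCuts e) = 0 := by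
  obtain ⟨⟨j₁, i₁⟩, ⟨j₂, i₂⟩⟩ := e
  obtain ⟨⟨-, hj₁⟩, ⟨hi₁, hi₁L⟩, -, -, hi₂⟩ := mem_doubleCuts.1 he
  dsimp only at h
  rcases h.lt_or_eq with h | h
  · simp only [swapCuts, if_pos h]
    exact doubleSplitTerm_add_eq_zero (split_split_of_lt h) (coef_pair_cancel_of_lt x h hj₁)
  · subst j₂
    simp only [swapCuts, lt_irrefl, if_false, if_true]
    rw [split_apply_self] at hi₂
    exact doubleSplitTerm_add_eq_zero split_split_self
      (coef_pair_cancel_self x hj₁ hi₁ (show i₁ + i₂ ≤ L j₁ by omega))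

theorem doubleSplitTerm_add_swapCuts (he : e ∈ doubleCuts t L) :
    doubleSplitTerm x t nu L e + doubleSplitTerm x t nu L (swapCuts e) = 0 := by
  by_cases h : e.2.1 ≤ e.1.1
  · exact doubleSplitTerm_add_swapCuts_of_le he h
  · have h' : (swapCuts e).2.1 ≤ (swapCuts e).1.1 := by
      obtain ⟨⟨j₁, i₁⟩, ⟨j₂, i₂⟩⟩ := e
      dsimp only at h
      simp only [swapCuts]
      split_ifs <;> dsimp only <;> omega
    have := doubleSplitTerm_add_swapCuts_of_le (nu := nu) (x := x) (swapCuts_mem he) h'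
    rwa [swapCuts_swapCuts he, add_comm] at this

theorem sum_doubleSplitTerm : ∑ e ∈ doubleCuts t L, doubleSplitTerm x t nu L e = 0 :=
  sum_involution (fun e _ => swapCuts e) (fun _ he => doubleSplitTerm_add_swapCuts he)
    (fun e _ _ => swapCuts_ne e) (fun _ he => swapCuts_mem he) (fun _ he => swapCuts_swapCuts he)

end Cancellation

theorem sum_Dmat_mul_Dmat_eq_zero (x : ℤ) {t k : ℕ} (nu : ℕ → ℕ) {L : ℕ → ℕ}
    (hL : ∀ m ∉ Icc 1 t, L m = 0) (hsum : ∑ m ∈ Icc 1 t, L m = k) :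
    ∑ mu ∈ Nat.antidiagonalTuple (t + 1) (k - 1),
      Dmat x (t + 1) nu (toFun (t + 1) mu) * Dmat x t (toFun (t + 1) mu) L = 0 := by
  rw [sum_Dmat_toFun_mul_Dmat x nu hL hsum, sum_Dmat_split_mul_coef, sum_doubleSplitTerm]

theorem stmt13_general (x : ℤ) (d k : ℕ)
    (lam : Fin (d - k + 1) → ℕ) (hlam : ∑ i, lam i = k)
    (nu : Fin (d - k + 3) → ℕ) :
    ∑ mu ∈ Finset.Nat.antidiagonalTuple (d - k + 2) (k - 1),
        Dmat x (d - k + 2) (toFun (d - k + 3) nu) (toFun (d - k + 2) mu) *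
          Dmat x (d - k + 1) (toFun (d - k + 2) mu) (toFun (d - k + 1) lam) = 0 :=
  sum_Dmat_mul_Dmat_eq_zero x _ (fun _ hm => toFun_eq_zero_of_notMem lam hm)
    (by rw [sum_toFun, hlam])

/-- `C_•(x, 1^d)` is a chain complex: `∂_{k-1} ∘ ∂_k = 0`. Stated on basis elements and
coefficients: for every weak composition `λ` of `k` with `d-k+1` parts and every weak
composition `ν` of `k-2` with `d-k+3` parts, the coefficient of `f_ν` in
`∂_{k-1}(∂_k(f_λ))` vanishes, for every integer value of `x`. -/
theorem stmt13 (x : ℤ) (d k : ℕ) (hk : 2 ≤ k) (hkd : k ≤ d)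
    (lam : Fin (d - k + 1) → ℕ) (hlam : ∑ i, lam i = k)
    (nu : Fin (d - k + 3) → ℕ) (hnu : ∑ i, nu i = k - 2) :
    ∑ mu ∈ Finset.Nat.antidiagonalTuple (d - k + 2) (k - 1),
        Dmat x (d - k + 2) (toFun (d - k + 3) nu) (toFun (d - k + 2) mu) *
          Dmat x (d - k + 1) (toFun (d - k + 2) mu) (toFun (d - k + 1) lam) = 0 :=
  stmt13_general x d k lam hlam nu
end

section
/- For 1 ≤ k ≤ t-1 and weak compositions λ (of d-t+1, t parts), μ (of d-t, t+1 parts), with g_k, h_k as in Lemma 3.1: ∑_{i≥0} binom(λ_k+1, i) · g_k(λ,μ; i) · h_k(λ,μ; i) = binom(∑_{m=1}^{k-1}(μ_m+λ_m)+μ_k+μ_{k+1}+2k-1, μ_k - λ_k + μ_{k+1} + 1) · binom(μ_k+μ_{k+1}+2, μ_{k+1}+1). -/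
/-!
Putting `y = Y`, `a = μ_k`, `b = λ_k + 1`, `c = μ_{k+1} + 1`, the theorem is the identity
`∑ⱼ C(b, j) C(y + a, y + b - 1 - j) C(y + a + b + c - j, c - j) = C(y + a + c, y + b - 1) C(a + c + 1, c)`
for binomial coefficients with natural upper and integer lower index (zero below `0`).

Write `n = y + a + c` and `r = y + b - 1`. Expanding the third factor by Vandermonde,
`C(n + (b - j), c - j) = ∑ₘ C(n, m) C(b - j, c - m - j)`, and swapping the sums, the trinomial
revision `C(b, j) C(b - j, c - m - j) = C(b, c - m) C(c - m, j)` turns the inner sum over `j` into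
another Vandermonde convolution, `C(n - m, r)`. A second trinomial revision
`C(n, m) C(n - m, r) = C(n, r) C(n - r, m)` pulls out `C(n, r)`, and what remains is the
Vandermonde convolution `∑ₘ C(n - r, m) C(b, c - m) = C(a + c + 1, c)`.
-/

open Finset

def chooseZ (n : ℕ) (r : ℤ) : ℤ := if 0 ≤ r then (n.choose r.toNat : ℤ) else 0

lemma chooseZ_of_neg {n : ℕ} {r : ℤ} (h : r < 0) : chooseZ n r = 0 := by
  simp [chooseZ, not_le.mpr h]

@[simp]
lemma chooseZ_natCast (n m : ℕ) : chooseZ n m = n.choose m := by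
  simp [chooseZ]

lemma chooseZ_of_lt {n : ℕ} {r : ℤ} (h : (n : ℤ) < r) : chooseZ n r = 0 := by
  lift r to ℕ using by omega
  rw [chooseZ_natCast, Nat.choose_eq_zero_of_lt (by omega), Nat.cast_zero]

lemma zbinom_eq_chooseZ {a r s : ℤ} {n : ℕ} (ha : a = n) (hr : r = s) :
    zbinom a r = chooseZ n s := by
  subst ha hr
  unfold zbinom chooseZ
  split <;> simp [Ring.choose_natCast]

lemma zbinom_eq_chooseZ_of_add_eq {a r s : ℤ} {n : ℕ} (ha : a = n) (hrs : r + s = n) :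
    zbinom a r = chooseZ n s := by
  rw [zbinom_eq_chooseZ ha rfl]
  rcases lt_or_ge s 0 with hs | hs
  · rw [chooseZ_of_neg hs, chooseZ_of_lt (by omega)]
  rcases lt_or_ge (n : ℤ) s with hns | hsn
  · rw [chooseZ_of_lt hns, chooseZ_of_neg (by omega)]
  lift s to ℕ using hs
  rw [show r = ((n - s : ℕ) : ℤ) by omega, chooseZ_natCast, chooseZ_natCast,
    Nat.choose_symm (by omega)]

theorem chooseZ_add_eq_sum_range (p q : ℕ) (r : ℤ) {N : ℕ} (hN : p < N) :
    chooseZ (p + q) r = ∑ s ∈ range N, chooseZ p s * chooseZ q (r - s) := by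
  rcases lt_or_ge r 0 with hr | hr
  · rw [chooseZ_of_neg hr]
    exact (sum_eq_zero fun s _ => by rw [chooseZ_of_neg (n := q) (by omega), mul_zero]).symm
  lift r to ℕ using hr
  have hN' : ∑ s ∈ range N, chooseZ p s * chooseZ q (r - s)
      = ∑ s ∈ range (N + r + 1), chooseZ p s * chooseZ q (r - s) :=
    sum_subset (range_mono (by omega)) fun s _ hs => by
      rw [chooseZ_of_lt (by simp only [mem_range] at hs; omega), zero_mul]
  have hr' : ∑ s ∈ range (r + 1), chooseZ p s * chooseZ q (r - s)
      = ∑ s ∈ range (N + r + 1), chooseZ p s * chooseZ q (r - s) :=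
    sum_subset (range_mono (by omega)) fun s _ hs => by
      rw [chooseZ_of_neg (n := q) (by simp only [mem_range] at hs; omega), mul_zero]
  rw [hN', ← hr', chooseZ_natCast, Nat.add_choose_eq, Nat.sum_antidiagonal_eq_sum_range_succ_mk]
  push_cast
  refine sum_congr rfl fun s hs => ?_
  rw [show (r : ℤ) - s = ((r - s : ℕ) : ℤ) by simp only [mem_range] at hs; omega,
    chooseZ_natCast, chooseZ_natCast]

theorem chooseZ_mul (n i : ℕ) (r : ℤ) :
    chooseZ n r * chooseZ r.toNat i = chooseZ n i * chooseZ (n - i) (r - i) := by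
  rcases lt_or_ge r 0 with hr | hr
  · rw [chooseZ_of_neg hr, chooseZ_of_neg (n := n - i) (by omega), zero_mul, mul_zero]
  lift r to ℕ using hr
  rw [Int.toNat_natCast]
  rcases lt_or_ge r i with hri | hir
  · rw [chooseZ_natCast r i, Nat.choose_eq_zero_of_lt hri, chooseZ_of_neg (n := n - i) (by omega)]
    simp
  · rw [show (r : ℤ) - i = ((r - i : ℕ) : ℤ) by omega]
    simp only [chooseZ_natCast]
    exact_mod_cast Nat.choose_mul hir

theorem chooseZ_mul_chooseZ_sub_comm (n m : ℕ) (r : ℤ) :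
    chooseZ n m * chooseZ (n - m) r = chooseZ n r * chooseZ (n - r.toNat) m := by
  rcases lt_or_ge r 0 with hr | hr
  · rw [chooseZ_of_neg hr, chooseZ_of_neg hr, mul_zero, zero_mul]
  lift r to ℕ using hr
  simp only [chooseZ_natCast, Int.toNat_natCast]
  have hm := Nat.choose_mul (n := n) (Nat.le_add_right m r)
  have hr' := Nat.choose_mul (n := n) (Nat.le_add_left r m)
  rw [Nat.add_sub_cancel_left] at hm
  rw [Nat.add_sub_cancel] at hr'
  exact_mod_cast by rw [← hm, ← hr', Nat.choose_symm_add]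

theorem sum_chooseZ_mul_chooseZ_sub_mul_chooseZ (b p : ℕ) (R r : ℤ) :
    ∑ j ∈ range (b + 1), chooseZ b j * chooseZ (b - j) (R - j) * chooseZ p (r - j)
      = chooseZ b R * chooseZ (R.toNat + p) r := by
  rw [sum_congr rfl fun j _ => by rw [← chooseZ_mul, mul_assoc], ← mul_sum]
  rcases le_or_gt R.toNat b with hR | hR
  · rw [chooseZ_add_eq_sum_range _ _ _ (Nat.lt_succ_of_le hR)]
  · rw [chooseZ_of_lt (by omega), zero_mul, zero_mul]

theorem sum_chooseZ_mul_chooseZ_mul_chooseZ (y a b c : ℕ) :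
    ∑ j ∈ range (b + 1), chooseZ b j * chooseZ (y + a) ((y : ℤ) + b - 1 - j)
        * chooseZ (y + a + b + c - j) ((c : ℤ) - j)
      = chooseZ (y + a + c) ((y : ℤ) + b - 1) * chooseZ (a + c + 1) c := by
  set n := y + a + c
  set r : ℤ := (y : ℤ) + b - 1
  calc _ = ∑ j ∈ range (b + 1), ∑ m ∈ range (n + 1), chooseZ n m *
          (chooseZ b j * chooseZ (b - j) ((c : ℤ) - m - j) * chooseZ (y + a) (r - j)) := by
        refine sum_congr rfl fun j hj => ?_
        rw [show y + a + b + c - j = n + (b - j) by simp only [mem_range] at hj; omega,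
          chooseZ_add_eq_sum_range n (b - j) _ (lt_add_one n), mul_sum]
        refine sum_congr rfl fun m _ => ?_
        rw [show (c : ℤ) - j - m = c - m - j by ring]
        ring
    _ = ∑ m ∈ range (n + 1),
          chooseZ n m * (chooseZ b (c - m) * chooseZ (((c : ℤ) - m).toNat + (y + a)) r) := by
        rw [sum_comm]
        refine sum_congr rfl fun m _ => ?_
        rw [← mul_sum, sum_chooseZ_mul_chooseZ_sub_mul_chooseZ]
    _ = ∑ m ∈ range (n + 1), chooseZ n r * (chooseZ (n - r.toNat) m * chooseZ b (c - m)) := by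
        refine sum_congr rfl fun m _ => ?_
        rcases lt_or_ge (c : ℤ) m with hcm | hmc
        · rw [chooseZ_of_neg (by omega : (c : ℤ) - m < 0)]
          ring
        · rw [show ((c : ℤ) - m).toNat + (y + a) = n - m by omega, mul_left_comm,
            chooseZ_mul_chooseZ_sub_comm]
          ring
    _ = chooseZ n r * chooseZ (a + c + 1) c := by
        rw [← mul_sum, ← chooseZ_add_eq_sum_range _ _ _ (by omega : n - r.toNat < n + 1)]
        rcases lt_or_ge (n : ℤ) r with hnr | hrn
        · rw [chooseZ_of_lt hnr, zero_mul, zero_mul]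
        rcases lt_or_ge r 0 with hr | hr
        · rw [chooseZ_of_neg hr, zero_mul, zero_mul]
        rw [show n - r.toNat + b = a + c + 1 by omega]

lemma Sfun_eq_Sfun_sub_one_add (lam mu : ℕ → ℕ) {k : ℕ} (hk : 1 ≤ k) :
    Sfun lam mu k = Sfun lam mu (k - 1) + mu k + lam k := by
  obtain ⟨j, rfl⟩ := Nat.exists_eq_add_of_le' hk
  rw [Sfun, Sfun, Nat.add_sub_cancel, sum_Icc_succ_top (by omega)]
  ring

theorem stmt18_general (lam mu : ℕ → ℕ) (k : ℕ) (hk : 1 ≤ k) :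
    ∑ i ∈ Finset.range (lam k + 2),
        zbinom ((lam k : ℤ) + 1) i * gfun lam mu k i * hfun lam mu k i =
      zbinom (Sfun lam mu (k - 1) + (mu k : ℤ) + (mu (k + 1) : ℤ) + 2 * k - 1)
          ((mu k : ℤ) - (lam k : ℤ) + (mu (k + 1) : ℤ) + 1) *
        zbinom ((mu k : ℤ) + (mu (k + 1) : ℤ) + 2) ((mu (k + 1) : ℤ) + 1) := by
  obtain ⟨y, hy⟩ : ∃ y : ℕ, (y : ℤ) = Sfun lam mu (k - 1) + 2 * ((k : ℤ) - 1) :=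
    ⟨(Sfun lam mu (k - 1)).toNat + 2 * (k - 1), by have := Sfun_nonneg lam mu (k - 1); omega⟩
  have hSk := Sfun_eq_Sfun_sub_one_add lam mu hk
  convert sum_chooseZ_mul_chooseZ_mul_chooseZ y (mu k) (lam k + 1) (mu (k + 1) + 1) using 1
  · refine sum_congr rfl fun i hi_mem => ?_
    have hi : i ≤ lam k + 1 := Nat.lt_succ_iff.mp (mem_range.mp hi_mem)
    unfold gfun hfun
    congr 1
    · congr 1
      · exact zbinom_eq_chooseZ (by push_cast; ring) rfl
      · exact zbinom_eq_chooseZ (by omega) (by omega)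
    · exact zbinom_eq_chooseZ_of_add_eq (by omega) (by omega)
  · congr 1
    · exact zbinom_eq_chooseZ_of_add_eq (by omega) (by omega)
    · exact zbinom_eq_chooseZ (by omega) (by omega)

/-- The second summation computation in Step 3 of the proof of Theorem 1.1:
`∑_{i≥0} binom(λ_k+1, i) g_k(λ,μ;i) h_k(λ,μ;i)
  = binom(S(k-1)+μ_k+μ_{k+1}+2k-1, μ_k-λ_k+μ_{k+1}+1) · binom(μ_k+μ_{k+1}+2, μ_{k+1}+1)`.
The sum is finite: terms with `i > λ_k + 1` vanish. -/
theorem stmt18 (d t : ℕ) (ht : 1 ≤ t) (lam mu : ℕ → ℕ)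
    (hlam : ∑ m ∈ Finset.Icc 1 t, (lam m : ℤ) = (d : ℤ) - t + 1)
    (hmu : ∑ m ∈ Finset.Icc 1 (t + 1), (mu m : ℤ) = (d : ℤ) - t)
    (k : ℕ) (hk : 1 ≤ k) (hkt : k ≤ t - 1) :
    ∑ i ∈ Finset.range (lam k + 2),
        zbinom ((lam k : ℤ) + 1) i * gfun lam mu k i * hfun lam mu k i =
      zbinom (Sfun lam mu (k - 1) + (mu k : ℤ) + (mu (k + 1) : ℤ) + 2 * k - 1)
          ((mu k : ℤ) - (lam k : ℤ) + (mu (k + 1) : ℤ) + 1) *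
        zbinom ((mu k : ℤ) + (mu (k + 1) : ℤ) + 2) ((mu (k + 1) : ℤ) + 1) :=
  stmt18_general lam mu k hk
end
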